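/- Imai–Iri correctness under the Fréchet criterion: let P = ⟨p₁,…,p_n⟩ and suppose Q = ⟨p_{i₀}=p₁, p_{i₁}, …, p_{i_k}=p_n⟩ is a subsequence such that, for each j, the Fréchet distance between the segment p_{i_j}p_{i_{j+1}} and the subpolyline ⟨p_{i_j}, p_{i_j+1}, …, p_{i_{j+1}}⟩ is at most ε. Then the Fréchet distance between the polyline Q and the polyline P is at most ε. -/

import Mathlib

open Set

abbrev E2 := EuclideanSpace ℝ (Fin 2)

/-- A reparametrization: a continuous, monotone nondecreasing map of `[0,1]`
onto `[0,1]`. -/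
def IsRepar (α : ℝ → ℝ) : Prop :=
  ContinuousOn α (Icc 0 1) ∧ MonotoneOn α (Icc 0 1) ∧ α '' Icc 0 1 = Icc 0 1

/-- The Fréchet distance between two curves parametrized over `[0,1]`:
the infimum over pairs of reparametrizations of the sup-distance. -/
noncomputable def frechetDist (f g : ℝ → E2) : ℝ :=
  sInf {r : ℝ | 0 ≤ r ∧ ∃ α β : ℝ → ℝ, IsRepar α ∧ IsRepar β ∧
    ∀ t ∈ Icc (0:ℝ) 1, ‖f (α t) - g (β t)‖ ≤ r}

/-- The constant-speed parametrization of the segment from `a` to `b`. -/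
noncomputable def segCurve (a b : E2) : ℝ → E2 := fun u => a + u • (b - a)

/-- The piecewise-linear curve through `p 0, p 1, …`, parametrized so that
vertex `p k` is reached at time `k`. -/
noncomputable def polyParam (p : ℕ → E2) (t : ℝ) : E2 :=
  p ⌊t⌋₊ + (t - (⌊t⌋₊ : ℝ)) • (p (⌊t⌋₊ + 1) - p ⌊t⌋₊)

/-- The subcurve of the polyline between parameters `s` and `t`,
reparametrized over `[0,1]`. -/
noncomputable def subcurve (p : ℕ → E2) (s t : ℝ) : ℝ → E2 :=
  fun u => polyParam p (s + u * (t - s))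

/-- The polygonal curve on the subsequence `p (j 0), …, p (j k)` of vertices
(a simplification with `k` links), reparametrized over `[0,1]`. -/
noncomputable def simplCurve (p : ℕ → E2) (j : ℕ → ℕ) (k : ℕ) : ℝ → E2 :=
  fun u => polyParam (fun m => p (j (min m k))) (u * k)

/-!
Take any `r > ε` and, for each link, reparametrizations matching the segment with its
subpolyline within `r`. Every reparametrization fixes `0` and `1`, so the end of the `m`-th
matching and the start of the next one both sit at the shared vertex `p (j (m + 1))`.
Running the `m`-th matching during the time interval `[m/k, (m+1)/k]` therefore glues the
pieces into continuous monotone surjections of `[0, 1]` that match `Q` with `P` within `r`.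
-/

lemma IsRepar.mem_Icc {α : ℝ → ℝ} (hα : IsRepar α) {t : ℝ} (ht : t ∈ Icc (0:ℝ) 1) :
    α t ∈ Icc (0:ℝ) 1 :=
  hα.2.2 ▸ mem_image_of_mem α ht

lemma IsRepar.map_zero {α : ℝ → ℝ} (hα : IsRepar α) : α 0 = 0 := by
  have zero_mem : (0:ℝ) ∈ Icc (0:ℝ) 1 := left_mem_Icc.2 zero_le_one
  obtain ⟨s, hs, hs0⟩ : (0:ℝ) ∈ α '' Icc 0 1 := by rwa [hα.2.2]
  have h := hα.2.1 zero_mem hs hs.1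
  rw [hs0] at h
  exact le_antisymm h (hα.mem_Icc zero_mem).1

lemma IsRepar.map_one {α : ℝ → ℝ} (hα : IsRepar α) : α 1 = 1 := by
  have one_mem : (1:ℝ) ∈ Icc (0:ℝ) 1 := right_mem_Icc.2 zero_le_one
  obtain ⟨s, hs, hs1⟩ : (1:ℝ) ∈ α '' Icc 0 1 := by rwa [hα.2.2]
  have h := hα.2.1 hs one_mem hs.2
  rw [hs1] at h
  exact le_antisymm (hα.mem_Icc one_mem).2 h

lemma isRepar_of_continuous_of_monotone {α : ℝ → ℝ} (hc : Continuous α) (hm : Monotone α)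
    (h0 : α 0 = 0) (h1 : α 1 = 1) : IsRepar α := by
  refine ⟨hc.continuousOn, hm.monotoneOn _, subset_antisymm ?_ ?_⟩
  · rintro _ ⟨t, ht, rfl⟩
    exact ⟨h0 ▸ hm ht.1, h1 ▸ hm ht.2⟩
  · simpa [h0, h1] using intermediate_value_Icc zero_le_one hc.continuousOn

lemma frechetDist_le_of_forall_lt {f g : ℝ → E2} {ε : ℝ}
    (h : ∀ r, ε < r → ∃ α β, IsRepar α ∧ IsRepar β ∧
      ∀ t ∈ Icc (0:ℝ) 1, ‖f (α t) - g (β t)‖ ≤ r) :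
    frechetDist f g ≤ ε := by
  refine le_of_forall_gt_imp_ge_of_dense fun r hr => ?_
  obtain ⟨α, β, hα, hβ, hαβ⟩ := h r hr
  have hr0 : 0 ≤ r := (norm_nonneg _).trans (hαβ 0 (left_mem_Icc.2 zero_le_one))
  exact csInf_le ⟨0, fun _ hs => hs.1⟩ ⟨hr0, α, β, hα, hβ, hαβ⟩

/-- Boundedness is what makes the infimum in `frechetDist` range over a nonempty set
(otherwise it is the junk value `sInf ∅ = 0`). -/
lemma exists_repar_of_frechetDist_lt {f g : ℝ → E2} {r : ℝ}
    (hf : Bornology.IsBounded (f '' Icc 0 1)) (hg : Bornology.IsBounded (g '' Icc 0 1))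
    (h : frechetDist f g < r) :
    ∃ α β, IsRepar α ∧ IsRepar β ∧ ∀ t ∈ Icc (0:ℝ) 1, ‖f (α t) - g (β t)‖ ≤ r := by
  obtain ⟨C, hC, hfC⟩ := hf.exists_pos_norm_le
  obtain ⟨D, hD, hgD⟩ := hg.exists_pos_norm_le
  have hid : IsRepar id := isRepar_of_continuous_of_monotone continuous_id monotone_id rfl rfl
  have hne : {r : ℝ | 0 ≤ r ∧ ∃ α β : ℝ → ℝ, IsRepar α ∧ IsRepar β ∧
      ∀ t ∈ Icc (0:ℝ) 1, ‖f (α t) - g (β t)‖ ≤ r}.Nonempty := by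
    refine ⟨C + D, by positivity, id, id, hid, hid, fun t ht => ?_⟩
    exact (norm_sub_le _ _).trans
      (add_le_add (hfC _ (mem_image_of_mem f ht)) (hgD _ (mem_image_of_mem g ht)))
  obtain ⟨s, ⟨-, α, β, hα, hβ, hs⟩, hsr⟩ := exists_lt_of_csInf_lt hne h
  exact ⟨α, β, hα, hβ, fun t ht => (hs t ht).trans hsr.le⟩

lemma exists_lt_mem_Icc_natCast {k : ℕ} (hk : 0 < k) {s : ℝ} (hs : s ∈ Icc (0:ℝ) k) :
    ∃ m < k, s ∈ Icc (m:ℝ) (m + 1) := by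
  rcases hs.2.lt_or_eq with hlt | rfl
  · exact ⟨⌊s⌋₊, (Nat.floor_lt hs.1).2 hlt, Nat.floor_le hs.1, (Nat.lt_floor_add_one s).le⟩
  · refine ⟨k - 1, by omega, ?_⟩
    rw [Nat.cast_sub hk, Nat.cast_one, sub_add_cancel]
    exact ⟨by linarith, le_rfl⟩

section concatParam

variable {x : ℕ → ℝ} {a : ℕ → ℝ → ℝ} {k : ℕ}

/-- The concatenation of the reparametrizations `a 0, …, a (k - 1)`: on `[i, i + 1]` it runs
through `a i`, affinely rescaled onto `[x i, x (i + 1)]`. Pieces already passed contribute their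
full increment `x (i + 1) - x i`, pieces not yet reached contribute nothing. -/
noncomputable def concatParam (x : ℕ → ℝ) (a : ℕ → ℝ → ℝ) (k : ℕ) (t : ℝ) : ℝ :=
  x 0 + ∑ i ∈ Finset.range k, a i (projIcc 0 1 zero_le_one (t - i)) * (x (i + 1) - x i)

lemma concatParam_eq (ha : ∀ i < k, IsRepar (a i)) {m : ℕ} (hm : m < k) {t : ℝ}
    (ht : t ∈ Icc (m:ℝ) (m + 1)) :
    concatParam x a k t = x m + a m (t - m) * (x (m + 1) - x m) := by
  have finished : ∀ l ≤ m, ∑ i ∈ Finset.range l,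
      a i (projIcc 0 1 zero_le_one (t - i)) * (x (i + 1) - x i) = x l - x 0 := by
    intro l
    induction l with
    | zero => simp
    | succ l ih =>
      intro hl
      have hlt : (l:ℝ) + 1 ≤ t := le_trans (by exact_mod_cast hl) ht.1
      rw [Finset.sum_range_succ, ih (by omega), projIcc_of_right_le _ (by linarith),
        (ha l (by omega)).map_one]
      ring
  have pending : ∀ i ∈ Finset.Ico (m + 1) k,
      a i (projIcc 0 1 zero_le_one (t - i)) * (x (i + 1) - x i) = 0 := by
    intro i hi
    have hit : t ≤ i := le_trans ht.2 (by exact_mod_cast (Finset.mem_Ico.1 hi).1)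
    rw [projIcc_of_le_left _ (by linarith), (ha i (Finset.mem_Ico.1 hi).2).map_zero, zero_mul]
  have hmem : t - m ∈ Icc (0:ℝ) 1 := ⟨by linarith [ht.1], by linarith [ht.2]⟩
  rw [concatParam, ← Finset.sum_range_add_sum_Ico _ (show m + 1 ≤ k from hm),
    Finset.sum_range_succ, finished m le_rfl, Finset.sum_eq_zero pending,
    projIcc_of_mem _ hmem]
  ring

lemma monotone_concatParam (ha : ∀ i < k, IsRepar (a i)) (hx : ∀ i < k, x i ≤ x (i + 1)) :
    Monotone (concatParam x a k) := by
  intro s t hst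
  unfold concatParam
  gcongr with i hi
  · exact sub_nonneg.2 (hx i (Finset.mem_range.1 hi))
  exact (ha i (Finset.mem_range.1 hi)).2.1 (projIcc 0 1 _ _).2 (projIcc 0 1 _ _).2
    (monotone_projIcc _ (sub_le_sub_right hst _))

lemma continuous_concatParam (ha : ∀ i < k, IsRepar (a i)) :
    Continuous (concatParam x a k) := by
  refine continuous_const.add (continuous_finsetSum _ fun i hi => ?_)
  refine ContinuousOn.comp_continuous (ha i (Finset.mem_range.1 hi)).1 ?_ (fun t => ?_)
    |>.mul continuous_const
  · fun_prop
  · exact (projIcc 0 1 _ _).2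

lemma isRepar_concatParam (hk : 0 < k) (ha : ∀ i < k, IsRepar (a i))
    (hx : ∀ i < k, x i ≤ x (i + 1)) (hx0 : x 0 = 0) (hxk : 0 < x k) :
    IsRepar (fun t => concatParam x a k (k * t) / x k) := by
  refine isRepar_of_continuous_of_monotone ?_ ?_ ?_ ?_
  · exact ((continuous_concatParam ha).comp (continuous_const_mul _)).div_const _
  · exact fun s t hst => div_le_div_of_nonneg_right
      (monotone_concatParam ha hx (by gcongr)) hxk.le
  · have h0 : (0:ℝ) ∈ Icc ((0:ℕ):ℝ) ((0:ℕ) + 1) := by simp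
    rw [mul_zero, concatParam_eq ha hk h0, Nat.cast_zero, sub_zero, (ha 0 hk).map_zero, hx0]
    simp
  · obtain ⟨l, rfl⟩ : ∃ l, k = l + 1 := ⟨k - 1, by omega⟩
    have h1 : ((l + 1 : ℕ):ℝ) ∈ Icc (l:ℝ) (l + 1) := by push_cast; simp
    have hlen : ((l + 1 : ℕ):ℝ) - l = 1 := by push_cast; ring
    rw [mul_one, concatParam_eq ha l.lt_succ_self h1, hlen, (ha l l.lt_succ_self).map_one,
      one_mul, add_sub_cancel, div_self hxk.ne']

end concatParam

lemma polyParam_natCast_add (q : ℕ → E2) (m : ℕ) {u : ℝ} (hu : u ∈ Icc (0:ℝ) 1) :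
    polyParam q (m + u) = segCurve (q m) (q (m + 1)) u := by
  rcases hu.2.lt_or_eq with hlt | rfl
  · have hfloor : ⌊(m:ℝ) + u⌋₊ = m :=
      (Nat.floor_eq_iff (add_nonneg m.cast_nonneg hu.1)).2
        ⟨le_add_of_nonneg_right hu.1, by linarith⟩
    rw [polyParam, hfloor, add_sub_cancel_left, segCurve]
  · have hfloor : ⌊(m:ℝ) + 1⌋₊ = m + 1 := by exact_mod_cast Nat.floor_natCast (m + 1)
    rw [polyParam, hfloor, segCurve, Nat.cast_succ, sub_self, zero_smul, add_zero, one_smul,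
      add_sub_cancel]

lemma isBounded_segCurve_image (a b : E2) : Bornology.IsBounded (segCurve a b '' Icc 0 1) :=
  (isCompact_Icc.image (by unfold segCurve; fun_prop)).isBounded

lemma isBounded_polyParam_image (q : ℕ → E2) (N : ℕ) :
    Bornology.IsBounded (polyParam q '' Icc 0 N) := by
  refine ((Bornology.isBounded_biUnion_finset (Finset.range (N + 1))).2
    fun m _ => isBounded_segCurve_image (q m) (q (m + 1))).subset ?_
  rintro _ ⟨s, hs, rfl⟩
  obtain ⟨m, hm, hsm⟩ := exists_lt_mem_Icc_natCast N.succ_pos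
    ⟨hs.1, hs.2.trans (by exact_mod_cast N.le_succ)⟩
  refine mem_biUnion (Finset.mem_coe.2 (Finset.mem_range.2 hm)) ⟨s - m, ?_, ?_⟩
  · exact ⟨by linarith [hsm.1], by linarith [hsm.2]⟩
  · rw [← polyParam_natCast_add q m ⟨by linarith [hsm.1], by linarith [hsm.2]⟩,
      add_sub_cancel]

lemma isBounded_subcurve_image (p : ℕ → E2) {s t : ℕ} (hst : s ≤ t) :
    Bornology.IsBounded (subcurve p s t '' Icc 0 1) := by
  refine (isBounded_polyParam_image p t).subset ?_
  rintro _ ⟨u, hu, rfl⟩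
  have hst' : (s:ℝ) ≤ t := by exact_mod_cast hst
  refine ⟨s + u * (t - s), ⟨?_, ?_⟩, rfl⟩ <;> nlinarith [hu.1, hu.2, (s.cast_nonneg : (0:ℝ) ≤ s)]

lemma simplCurve_div (p : ℕ → E2) (j : ℕ → ℕ) {k : ℕ} (hk : k ≠ 0) (s : ℝ) :
    simplCurve p j k (s / k) = polyParam (fun m => p (j (min m k))) s := by
  rw [simplCurve, div_mul_cancel₀ _ (by exact_mod_cast hk)]

lemma subcurve_zero_div (p : ℕ → E2) {t : ℝ} (ht : t ≠ 0) (s : ℝ) :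
    subcurve p 0 t (s / t) = polyParam p s := by
  rw [subcurve, sub_zero, div_mul_cancel₀ _ ht, zero_add]

lemma exists_repar_simplCurve_subcurve {p : ℕ → E2} {j : ℕ → ℕ} {k : ℕ} (hk : 0 < k)
    (hj : MonotoneOn j (Iic k)) (h0 : j 0 = 0) (hjk : 0 < j k) {r : ℝ} {a b : ℕ → ℝ → ℝ}
    (ha : ∀ m < k, IsRepar (a m)) (hb : ∀ m < k, IsRepar (b m))
    (hab : ∀ m < k, ∀ u ∈ Icc (0:ℝ) 1,
      ‖segCurve (p (j m)) (p (j (m + 1))) (a m u) - subcurve p (j m) (j (m + 1)) (b m u)‖ ≤ r) :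
    ∃ α β, IsRepar α ∧ IsRepar β ∧
      ∀ t ∈ Icc (0:ℝ) 1, ‖simplCurve p j k (α t) - subcurve p 0 (j k) (β t)‖ ≤ r := by
  have hjm : ∀ m < k, ((j m : ℕ) : ℝ) ≤ j (m + 1) := fun m hm => by
    exact_mod_cast hj (mem_Iic.2 hm.le) (mem_Iic.2 hm) m.le_succ
  have hjk' : (0:ℝ) < j k := by exact_mod_cast hjk
  refine ⟨fun t => concatParam Nat.cast a k (k * t) / k,
    fun t => concatParam (fun m => (j m : ℝ)) b k (k * t) / j k,
    isRepar_concatParam hk ha (fun i _ => by simp) Nat.cast_zero (by exact_mod_cast hk),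
    isRepar_concatParam hk hb hjm (by simp [h0]) hjk', fun t ht => ?_⟩
  have hk' : (0:ℝ) < k := by exact_mod_cast hk
  obtain ⟨m, hm, hkt⟩ := exists_lt_mem_Icc_natCast hk (s := k * t)
    ⟨by nlinarith [ht.1], by nlinarith [ht.2]⟩
  have hu : (k:ℝ) * t - m ∈ Icc (0:ℝ) 1 := ⟨by linarith [hkt.1], by linarith [hkt.2]⟩
  have hseg : polyParam (fun i => p (j (min i k)))
      (m + a m (k * t - m) * ((m + 1 : ℕ) - m)) =
      segCurve (p (j m)) (p (j (m + 1))) (a m (k * t - m)) := by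
    rw [Nat.cast_succ, add_sub_cancel_left, mul_one,
      polyParam_natCast_add _ m ((ha m hm).mem_Icc hu), min_eq_left hm.le, min_eq_left hm]
  rw [simplCurve_div p j hk.ne', subcurve_zero_div p hjk'.ne', concatParam_eq ha hm hkt,
    concatParam_eq hb hm hkt, hseg]
  exact hab m hm _ hu

theorem stmt_16_general (p : ℕ → E2) (n k : ℕ) (hk : 0 < k) (ε : ℝ)
    (j : ℕ → ℕ) (hmono : StrictMonoOn j (Iic k)) (h0 : j 0 = 0) (hlast : j k = n)
    (hlinks : ∀ m < k, frechetDist (segCurve (p (j m)) (p (j (m + 1))))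
      (subcurve p (j m) (j (m + 1))) ≤ ε) :
    frechetDist (simplCurve p j k) (subcurve p 0 n) ≤ ε := by
  subst hlast
  have hjk : 0 < j k := h0 ▸ hmono (mem_Iic.2 k.zero_le) (mem_Iic.2 le_rfl) hk
  refine frechetDist_le_of_forall_lt fun r hr => ?_
  have hlink : ∀ m < k, ∃ α β, IsRepar α ∧ IsRepar β ∧ ∀ u ∈ Icc (0:ℝ) 1,
      ‖segCurve (p (j m)) (p (j (m + 1))) (α u) - subcurve p (j m) (j (m + 1)) (β u)‖ ≤ r :=
    fun m hm => exists_repar_of_frechetDist_lt (isBounded_segCurve_image _ _)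
      (isBounded_subcurve_image p (hmono.monotoneOn (mem_Iic.2 hm.le) (mem_Iic.2 hm) m.le_succ))
      ((hlinks m hm).trans_lt hr)
  choose! a b ha hb hab using hlink
  exact exists_repar_simplCurve_subcurve hk hmono.monotoneOn h0 hjk ha hb hab

/-- Imai–Iri correctness under the Fréchet criterion: if every link of the
subsequence `p (j 0), …, p (j k)` has Fréchet distance at most `ε` to the
subpolyline of `P` it replaces, then the whole simplification has Fréchet
distance at most `ε` to `P` (with vertices `p 0, …, p n`). -/
theorem stmt_16 (p : ℕ → E2) (n k : ℕ) (hk : 0 < k) (ε : ℝ) (hε : 0 ≤ ε)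
    (j : ℕ → ℕ) (hmono : StrictMonoOn j (Iic k)) (h0 : j 0 = 0) (hlast : j k = n)
    (hlinks : ∀ m < k, frechetDist (segCurve (p (j m)) (p (j (m + 1))))
      (subcurve p (j m) (j (m + 1))) ≤ ε) :
    frechetDist (simplCurve p j k) (subcurve p 0 n) ≤ ε :=
  stmt_16_general p n k hk ε j hmono h0 hlast hlinks
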